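/- For every m ≥ 1 and c ≥ 1, there is a minor embedding of the complete graph K_{cm+1} into the hardware graph F(m,c) in which every branch set φ(u) contains at most 2m vertices of F(m,c); in particular the embedding uses at most 2m(cm+1) vertices of the fabric. -/

import Mathlib

open SimpleGraph

/-- A tree decomposition of `G` with tree `T` and bags `B`. -/
def IsTreeDecomp {V I : Type} (G : SimpleGraph V) (T : SimpleGraph I)
    (B : I → Finset V) : Prop :=
  T.IsTree ∧
  (∀ v : V, ∃ i : I, v ∈ B i) ∧
  (∀ u v : V, G.Adj u v → ∃ i : I, u ∈ B i ∧ v ∈ B i) ∧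
  (∀ v : V, (T.induce {i : I | v ∈ B i}).Connected)

/-- The treewidth of `G`: the least `k` such that `G` has a tree decomposition
all of whose bags have at most `k + 1` vertices (i.e. width at most `k`). -/
noncomputable def treewidth {V : Type} (G : SimpleGraph V) : ℕ :=
  sInf {k : ℕ | ∃ (I : Type) (T : SimpleGraph I) (B : I → Finset V),
    IsTreeDecomp G T B ∧ ∀ i : I, (B i).card ≤ k + 1}

/-- `H` is a minor of `G`: branch sets are nonempty (connectedness includes
nonemptiness), induce connected subgraphs, are pairwise disjoint, and every
edge of `H` is realized by an edge of `G` between the corresponding branch sets. -/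
def IsMinor {V W : Type} (H : SimpleGraph V) (G : SimpleGraph W) : Prop :=
  ∃ φ : V → Set W,
    (∀ v : V, (G.induce (φ v)).Connected) ∧
    (∀ u v : V, u ≠ v → Disjoint (φ u) (φ v)) ∧
    (∀ u v : V, H.Adj u v → ∃ a ∈ φ u, ∃ b ∈ φ v, G.Adj a b)

/-- The `n × m` two-dimensional grid graph: vertices `(i, j)` are adjacent iff
they differ by exactly 1 in one coordinate and agree in the other. -/
def gridGraph (n m : ℕ) : SimpleGraph (Fin n × Fin m) :=
  SimpleGraph.fromRel (fun p q =>
    (p.1 = q.1 ∧ p.2.val + 1 = q.2.val) ∨ (p.2 = q.2 ∧ p.1.val + 1 = q.1.val))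

/-- The hardware graph `F(m, c)`: an `m × m` grid of `K_{c,c}` unit cells.
A vertex `(a, b, d)` lies in cell `(a, b)`; it is on the left half if `d < c`
and the right half otherwise.  Left and right halves of a cell are completely
joined; left-half vertices are joined to their images in the cell directly
below; right-half vertices are joined to their images in the cell to the right. -/
def hardwareGraph (m c : ℕ) : SimpleGraph (Fin m × Fin m × Fin (2 * c)) :=
  SimpleGraph.fromRel (fun x y =>
    (x.1 = y.1 ∧ x.2.1 = y.2.1 ∧ x.2.2.val < c ∧ c ≤ y.2.2.val) ∨
    (x.2.1 = y.2.1 ∧ x.2.2 = y.2.2 ∧ x.2.2.val < c ∧ x.1.val + 1 = y.1.val) ∨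
    (x.1 = y.1 ∧ x.2.2 = y.2.2 ∧ c ≤ x.2.2.val ∧ x.2.1.val + 1 = y.2.1.val))

/-!
Label a left vertex `(a, b, d)` (`d < c`) of `F(m, c)` by `c * b + d` and a right vertex
`(a, b, c + k)` by `c * a + k + 1`; the branch set of `u ∈ {0, …, cm}` is the set of vertices
labelled `u`. Its left vertices form (for `u < cm`) a full column `{(·, b, d)}`, which is a path
along the vertical edges, and its right vertices form (for `u ≥ 1`) a full row, a path along the
horizontal edges; column and row cross in a cell, where the `K_{c,c}` joins them. Any column
crosses any row, so the label classes `u < v` are joined in the cell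
`((v - 1) / c, u / c)`.
-/

namespace SimpleGraph

lemma reachable_induce_of_adj_succ {V : Type*} {G : SimpleGraph V} {s : Set V} {n : ℕ}
    (f : Fin n → V) (hs : ∀ i, f i ∈ s)
    (hf : ∀ i j : Fin n, i.val + 1 = j.val → G.Adj (f i) (f j)) (i j : Fin n) :
    (G.induce s).Reachable ⟨f i, hs i⟩ ⟨f j, hs j⟩ :=
  let φ : pathGraph n →g G.induce s :=
    { toFun := fun i => ⟨f i, hs i⟩
      map_rel' := fun {i j} hij => (pathGraph_adj.1 hij).elim (hf i j) fun h => (hf j i h).symm }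
  (pathGraph_preconnected n i j).map φ

end SimpleGraph

lemma Nat.eq_and_eq_of_mul_add_eq_mul_add {c b b' d d' : ℕ} (hd : d < c) (hd' : d' < c)
    (h : c * b + d = c * b' + d') : b = b' ∧ d = d' := by
  have hc : 0 < c := by omega
  have hdiv := congrArg (· / c) h
  have hmod := congrArg (· % c) h
  simp only [Nat.mul_add_div hc, Nat.div_eq_of_lt hd, Nat.div_eq_of_lt hd', Nat.mul_add_mod,
    Nat.mod_eq_of_lt hd, Nat.mod_eq_of_lt hd'] at hdiv hmod
  omega

lemma Nat.exists_fin_mul_add_eq {c m u : ℕ} (hu : u < c * m) :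
    ∃ (b : Fin m) (k : Fin c), c * b + k = u :=
  ⟨⟨u / c, Nat.div_lt_of_lt_mul hu⟩, ⟨u % c, Nat.mod_lt u (Nat.pos_of_mul_pos_right hu.pos)⟩,
    Nat.div_add_mod u c⟩

namespace hardwareGraph

variable {m c : ℕ}

lemma adj_of_lt_of_le (a b : Fin m) {d d' : Fin (2 * c)} (hd : d.val < c) (hd' : c ≤ d'.val) :
    (hardwareGraph m c).Adj (a, b, d) (a, b, d') :=
  (fromRel_adj _ _ _).2
    ⟨ne_of_apply_ne (·.2.2.val) (by dsimp only; omega), Or.inl (Or.inl ⟨rfl, rfl, hd, hd'⟩)⟩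

lemma adj_of_succ_fst {a a' : Fin m} (b : Fin m) {d : Fin (2 * c)} (hd : d.val < c)
    (ha : a.val + 1 = a'.val) : (hardwareGraph m c).Adj (a, b, d) (a', b, d) :=
  (fromRel_adj _ _ _).2
    ⟨ne_of_apply_ne (·.1.val) (by dsimp only; omega), Or.inl (Or.inr (Or.inl ⟨rfl, rfl, hd, ha⟩))⟩

lemma adj_of_succ_snd (a : Fin m) {b b' : Fin m} {d : Fin (2 * c)} (hd : c ≤ d.val)
    (hb : b.val + 1 = b'.val) : (hardwareGraph m c).Adj (a, b, d) (a, b', d) :=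
  (fromRel_adj _ _ _).2
    ⟨ne_of_apply_ne (·.2.1.val) (by dsimp only; omega), Or.inl (Or.inr (Or.inr ⟨rfl, rfl, hd, hb⟩))⟩

def label (x : Fin m × Fin m × Fin (2 * c)) : ℕ :=
  if x.2.2.val < c then c * x.2.1 + x.2.2 else c * x.1 + (x.2.2 - c) + 1

lemma label_of_lt {a b : Fin m} {d : Fin (2 * c)} (hd : d.val < c) :
    label (a, b, d) = c * b + d :=
  if_pos hd

lemma label_of_le {a b : Fin m} {d : Fin (2 * c)} (hd : c ≤ d.val) :
    label (a, b, d) = c * a + (d - c) + 1 :=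
  if_neg hd.not_gt

lemma snd_eq_of_label_eq {x y : Fin m × Fin m × Fin (2 * c)} (hx : x.2.2.val < c)
    (hy : y.2.2.val < c) (h : label x = label y) : x.2 = y.2 := by
  obtain ⟨a, b, d⟩ := x
  obtain ⟨a', b', d'⟩ := y
  dsimp only at hx hy
  rw [label_of_lt hx, label_of_lt hy] at h
  obtain ⟨hb, hd⟩ := Nat.eq_and_eq_of_mul_add_eq_mul_add hx hy h
  simp [Fin.ext_iff, hb, hd]

lemma fst_eq_of_label_eq {x y : Fin m × Fin m × Fin (2 * c)} (hx : c ≤ x.2.2.val)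
    (hy : c ≤ y.2.2.val) (h : label x = label y) : x.1 = y.1 ∧ x.2.2 = y.2.2 := by
  obtain ⟨a, b, d⟩ := x
  obtain ⟨a', b', d'⟩ := y
  dsimp only at hx hy
  rw [label_of_le hx, label_of_le hy] at h
  obtain ⟨ha, hd⟩ := Nat.eq_and_eq_of_mul_add_eq_mul_add (by omega : d - c < c)
    (by omega : d' - c < c) (Nat.add_right_cancel h)
  simp only [Fin.ext_iff]
  omega

lemma reachable_induce_column {s : Set (Fin m × Fin m × Fin (2 * c))} {b : Fin m}
    {d : Fin (2 * c)} (hd : d.val < c) (hs : ∀ a, (a, b, d) ∈ s) (a a' : Fin m) :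
    ((hardwareGraph m c).induce s).Reachable ⟨(a, b, d), hs a⟩ ⟨(a', b, d), hs a'⟩ :=
  reachable_induce_of_adj_succ (fun a => (a, b, d)) hs (fun _ _ => adj_of_succ_fst b hd) a a'

lemma reachable_induce_row {s : Set (Fin m × Fin m × Fin (2 * c))} {a : Fin m}
    {d : Fin (2 * c)} (hd : c ≤ d.val) (hs : ∀ b, (a, b, d) ∈ s) (b b' : Fin m) :
    ((hardwareGraph m c).induce s).Reachable ⟨(a, b, d), hs b⟩ ⟨(a, b', d), hs b'⟩ :=
  reachable_induce_of_adj_succ (fun b => (a, b, d)) hs (fun _ _ => adj_of_succ_snd a hd) b b'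

variable (m c) in
def branchSet (u : ℕ) : Finset (Fin m × Fin m × Fin (2 * c)) :=
  Finset.univ.filter (label · = u)

lemma mem_branchSet {u : ℕ} {x : Fin m × Fin m × Fin (2 * c)} :
    x ∈ branchSet m c u ↔ label x = u := by
  simp [branchSet]

lemma disjoint_branchSet {u v : ℕ} (h : u ≠ v) : Disjoint (branchSet m c u) (branchSet m c v) :=
  Finset.disjoint_filter.2 fun _ _ hu hv => h (hu.symm.trans hv)

lemma card_branchSet_le (u : ℕ) : (branchSet m c u).card ≤ 2 * m := by
  rw [← Finset.card_filter_add_card_filter_not (fun x => x.2.2.val < c)]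
  have hleft : ((branchSet m c u).filter (fun x => x.2.2.val < c)).card ≤ m := by
    refine (Finset.card_le_card_of_injOn Prod.fst (fun _ _ => Finset.mem_coe.2
      (Finset.mem_univ _)) ?_).trans_eq (Finset.card_fin m)
    intro x hx y hy hxy
    simp only [Finset.coe_filter, mem_branchSet, Set.mem_ofPred_eq] at hx hy
    exact Prod.ext hxy (snd_eq_of_label_eq hx.2 hy.2 (hx.1.trans hy.1.symm))
  have hright : ((branchSet m c u).filter (fun x => ¬ x.2.2.val < c)).card ≤ m := by
    refine (Finset.card_le_card_of_injOn (fun x => x.2.1) (fun _ _ => Finset.mem_coe.2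
      (Finset.mem_univ _)) ?_).trans_eq (Finset.card_fin m)
    intro x hx y hy hxy
    simp only [Finset.coe_filter, mem_branchSet, Set.mem_ofPred_eq, not_lt] at hx hy
    obtain ⟨h₁, h₂⟩ := fst_eq_of_label_eq hx.2 hy.2 (hx.1.trans hy.1.symm)
    exact Prod.ext h₁ (Prod.ext hxy h₂)
  omega

lemma exists_column_subset_branchSet {u : ℕ} (hu : u < c * m) :
    ∃ (b : Fin m) (d : Fin (2 * c)), d.val < c ∧ ∀ a, (a, b, d) ∈ branchSet m c u := by
  obtain ⟨b, k, hbk⟩ := Nat.exists_fin_mul_add_eq hu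
  exact ⟨b, ⟨k, by omega⟩, k.isLt, fun a => mem_branchSet.2 ((label_of_lt k.isLt).trans hbk)⟩

lemma exists_row_subset_branchSet_succ {u : ℕ} (hu : u < c * m) :
    ∃ (a : Fin m) (d : Fin (2 * c)), c ≤ d.val ∧ ∀ b, (a, b, d) ∈ branchSet m c (u + 1) := by
  obtain ⟨a, k, hak⟩ := Nat.exists_fin_mul_add_eq hu
  refine ⟨a, ⟨c + k, by omega⟩, Nat.le_add_right c k, fun b => mem_branchSet.2 ?_⟩
  rw [label_of_le (Nat.le_add_right c k)]
  simp only [Nat.add_sub_cancel_left, hak]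

lemma branchSet_preconnected (u : ℕ) :
    ((hardwareGraph m c).induce
      (branchSet m c u : Set (Fin m × Fin m × Fin (2 * c)))).Preconnected := by
  set s : Set (Fin m × Fin m × Fin (2 * c)) := ↑(branchSet m c u)
  have hcol {a b : Fin m} {d : Fin (2 * c)} (hd : d.val < c) (h : (a, b, d) ∈ s) (a' : Fin m) :
      (a', b, d) ∈ s := by
    simpa [s, mem_branchSet, label_of_lt hd] using h
  have hrow {a b : Fin m} {d : Fin (2 * c)} (hd : c ≤ d.val) (h : (a, b, d) ∈ s) (b' : Fin m) :
      (a, b', d) ∈ s := by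
    simpa [s, mem_branchSet, label_of_le hd] using h
  have cross : ∀ x y (hx : x ∈ s) (hy : y ∈ s), x.2.2.val < c → c ≤ y.2.2.val →
      ((hardwareGraph m c).induce s).Reachable ⟨x, hx⟩ ⟨y, hy⟩ := by
    rintro ⟨a, b, d⟩ ⟨a', b', d'⟩ hx hy hd hd'
    have hmeet : ((hardwareGraph m c).induce s).Adj ⟨(a', b, d), hcol hd hx a'⟩
        ⟨(a', b, d'), hrow hd' hy b⟩ := adj_of_lt_of_le a' b hd hd'
    exact (reachable_induce_column hd (hcol hd hx) a a').trans
      (hmeet.reachable.trans (reachable_induce_row hd' (hrow hd' hy) b b'))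
  rintro ⟨⟨a, b, d⟩, hx⟩ ⟨⟨a', b', d'⟩, hy⟩
  have hlabel : label (a, b, d) = label (a', b', d') :=
    (mem_branchSet.1 hx).trans (mem_branchSet.1 hy).symm
  by_cases hd : d.val < c <;> by_cases hd' : d'.val < c
  · obtain ⟨rfl, rfl⟩ := Prod.ext_iff.1 (snd_eq_of_label_eq hd hd' hlabel)
    exact reachable_induce_column hd (hcol hd hx) a a'
  · exact cross _ _ hx hy hd (not_lt.1 hd')
  · exact (cross _ _ hy hx hd' (not_lt.1 hd)).symm
  · obtain ⟨rfl, rfl⟩ := fst_eq_of_label_eq (not_lt.1 hd) (not_lt.1 hd') hlabel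
    exact reachable_induce_row (not_lt.1 hd) (hrow (not_lt.1 hd) hx) b b'

lemma branchSet_connected {u : ℕ} (hu : u ≤ c * m) (hcm : 0 < c * m) :
    ((hardwareGraph m c).induce
      (branchSet m c u : Set (Fin m × Fin m × Fin (2 * c)))).Connected := by
  refine (connected_iff _).2 ⟨branchSet_preconnected u, ?_⟩
  rcases hu.lt_or_eq with hu | rfl
  · obtain ⟨b, d, -, hcol⟩ := exists_column_subset_branchSet hu
    exact ⟨⟨_, hcol b⟩⟩
  · obtain ⟨a, d, -, hrow⟩ := exists_row_subset_branchSet_succ (Nat.sub_lt hcm one_pos)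
    rw [Nat.sub_one_add_one hcm.ne'] at hrow
    exact ⟨⟨_, hrow a⟩⟩

lemma exists_adj_branchSet_of_lt {u v : ℕ} (huv : u < v) (hv : v ≤ c * m) :
    ∃ x ∈ branchSet m c u, ∃ y ∈ branchSet m c v, (hardwareGraph m c).Adj x y := by
  obtain ⟨w, rfl⟩ : ∃ w, v = w + 1 := ⟨v - 1, by omega⟩
  obtain ⟨b, d, hd, hcol⟩ := exists_column_subset_branchSet (by omega : u < c * m)
  obtain ⟨a, d', hd', hrow⟩ := exists_row_subset_branchSet_succ (by omega : w < c * m)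
  exact ⟨_, hcol a, _, hrow b, adj_of_lt_of_le a b hd hd'⟩

end hardwareGraph

open hardwareGraph in
/-- For every `m ≥ 1` and `c ≥ 1`, there is a minor embedding of `K_{cm+1}`
into `F(m, c)` in which every branch set `φ u` contains at most `2m` vertices;
in particular the embedding uses at most `2m(cm+1)` vertices of the fabric. -/
theorem isMinor_clique_hardwareGraph_small (m c : ℕ) (hm : 1 ≤ m) (hc : 1 ≤ c) :
    ∃ φ : Fin (c * m + 1) → Finset (Fin m × Fin m × Fin (2 * c)),
      (∀ v, ((hardwareGraph m c).induce (↑(φ v) : Set (Fin m × Fin m × Fin (2 * c)))).Connected) ∧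
      (∀ u v, u ≠ v → Disjoint (φ u) (φ v)) ∧
      (∀ u v : Fin (c * m + 1), (⊤ : SimpleGraph (Fin (c * m + 1))).Adj u v →
        ∃ a ∈ φ u, ∃ b ∈ φ v, (hardwareGraph m c).Adj a b) ∧
      (∀ u, (φ u).card ≤ 2 * m) ∧
      (Finset.univ.biUnion φ).card ≤ 2 * m * (c * m + 1) := by
  have hcard (u : Fin (c * m + 1)) : (branchSet m c u).card ≤ 2 * m := card_branchSet_le u
  refine ⟨fun u => branchSet m c u,
    fun u => branchSet_connected (Nat.lt_succ_iff.1 u.isLt) (Nat.mul_pos hc hm),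
    fun u v huv => disjoint_branchSet (Fin.val_injective.ne huv), fun u v huv => ?_, hcard, ?_⟩
  · rcases lt_or_gt_of_ne ((top_adj u v).1 huv) with huv | hvu
    · exact exists_adj_branchSet_of_lt huv (Nat.lt_succ_iff.1 v.isLt)
    · obtain ⟨y, hy, x, hx, hyx⟩ := exists_adj_branchSet_of_lt hvu (Nat.lt_succ_iff.1 u.isLt)
      exact ⟨x, hx, y, hy, hyx.symm⟩
  · calc (Finset.univ.biUnion fun u : Fin (c * m + 1) => branchSet m c u).card
        ≤ ∑ u : Fin (c * m + 1), (branchSet m c u).card := Finset.card_biUnion_le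
      _ ≤ Finset.univ.card • (2 * m) := Finset.sum_le_card_nsmul _ _ _ fun u _ => hcard u
      _ = 2 * m * (c * m + 1) := by simp [mul_comm]
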